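/- For the harmonic oscillator system E3, the operator identity L₁² + L₃² − L₁H − ω²X² + ω² = 0 holds, where L₁ = ∂ₓ² − ω²x², L₃ = ∂ₓ∂_y − ω²xy, X = x∂_y − y∂ₓ, H = ∂ₓ² + ∂_y² − ω²(x²+y²). -/

import Mathlib

noncomputable section

/-- Partial derivative in `x` of a function on `ℝ²`. -/
def dx (f : ℝ × ℝ → ℂ) : ℝ × ℝ → ℂ := fun p => fderiv ℝ f p (1, 0)

/-- Partial derivative in `y` of a function on `ℝ²`. -/
def dy (f : ℝ × ℝ → ℂ) : ℝ × ℝ → ℂ := fun p => fderiv ℝ f p (0, 1)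

/-- `L₁ = ∂ₓ² − ω²x²`. -/
def L1 (ω : ℂ) (f : ℝ × ℝ → ℂ) : ℝ × ℝ → ℂ :=
  fun p => dx (dx f) p - ω ^ 2 * (p.1 : ℂ) ^ 2 * f p

/-- `L₃ = ∂ₓ∂_y − ω²xy`. -/
def L3 (ω : ℂ) (f : ℝ × ℝ → ℂ) : ℝ × ℝ → ℂ :=
  fun p => dx (dy f) p - ω ^ 2 * (p.1 : ℂ) * (p.2 : ℂ) * f p

/-- `X = x∂_y − y∂ₓ`. -/
def Xop (f : ℝ × ℝ → ℂ) : ℝ × ℝ → ℂ :=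
  fun p => (p.1 : ℂ) * dy f p - (p.2 : ℂ) * dx f p

/-- `H = ∂ₓ² + ∂_y² − ω²(x²+y²)`. -/
def Hop (ω : ℂ) (f : ℝ × ℝ → ℂ) : ℝ × ℝ → ℂ :=
  fun p => dx (dx f) p + dy (dy f) p - ω ^ 2 * ((p.1 : ℂ) ^ 2 + (p.2 : ℂ) ^ 2) * f p

section Toolkit

variable {f g h c : ℝ × ℝ → ℂ}

lemma smooth_dx (hg : ContDiff ℝ (⊤ : ℕ∞) g) : ContDiff ℝ (⊤ : ℕ∞) (dx g) :=
  (hg.fderiv_right (by simp)).clm_apply contDiff_const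

lemma smooth_dy (hg : ContDiff ℝ (⊤ : ℕ∞) g) : ContDiff ℝ (⊤ : ℕ∞) (dy g) :=
  (hg.fderiv_right (by simp)).clm_apply contDiff_const

lemma dx_sub (hg : Differentiable ℝ g) (hh : Differentiable ℝ h) :
    dx (fun p => g p - h p) = fun p => dx g p - dx h p := by
  funext p; simp [dx, fderiv_fun_sub (hg p) (hh p)]

lemma dy_sub (hg : Differentiable ℝ g) (hh : Differentiable ℝ h) :
    dy (fun p => g p - h p) = fun p => dy g p - dy h p := by
  funext p; simp [dy, fderiv_fun_sub (hg p) (hh p)]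

lemma dx_add (hg : Differentiable ℝ g) (hh : Differentiable ℝ h) :
    dx (fun p => g p + h p) = fun p => dx g p + dx h p := by
  funext p; simp [dx, fderiv_fun_add (hg p) (hh p)]

lemma dx_const_mul (a : ℂ) (hg : Differentiable ℝ g) :
    dx (fun p => a * g p) = fun p => a * dx g p := by
  funext p; simp [dx, fderiv_const_mul (hg p)]

lemma dy_const_mul (a : ℂ) (hg : Differentiable ℝ g) :
    dy (fun p => a * g p) = fun p => a * dy g p := by
  funext p; simp [dy, fderiv_const_mul (hg p)]

lemma hasFDerivAt_cx (p : ℝ × ℝ) :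
    HasFDerivAt (fun q : ℝ × ℝ => (q.1 : ℂ))
      (Complex.ofRealCLM.comp (ContinuousLinearMap.fst ℝ ℝ ℝ)) p :=
  Complex.ofRealCLM.hasFDerivAt.comp p (hasFDerivAt_fst)

lemma hasFDerivAt_cy (p : ℝ × ℝ) :
    HasFDerivAt (fun q : ℝ × ℝ => (q.2 : ℂ))
      (Complex.ofRealCLM.comp (ContinuousLinearMap.snd ℝ ℝ ℝ)) p :=
  Complex.ofRealCLM.hasFDerivAt.comp p (hasFDerivAt_snd)

lemma diff_cx : Differentiable ℝ (fun q : ℝ × ℝ => (q.1 : ℂ)) :=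
  fun p => (hasFDerivAt_cx p).differentiableAt

lemma diff_cy : Differentiable ℝ (fun q : ℝ × ℝ => (q.2 : ℂ)) :=
  fun p => (hasFDerivAt_cy p).differentiableAt

lemma dx_mul (hc : Differentiable ℝ c) (hg : Differentiable ℝ g) :
    dx (fun p => c p * g p) = fun p => dx c p * g p + c p * dx g p := by
  funext p; simp [dx, fderiv_fun_mul (hc p) (hg p)]; ring

lemma dy_mul (hc : Differentiable ℝ c) (hg : Differentiable ℝ g) :
    dy (fun p => c p * g p) = fun p => dy c p * g p + c p * dy g p := by
  funext p; simp [dy, fderiv_fun_mul (hc p) (hg p)]; ring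

lemma dx_cx : dx (fun q : ℝ × ℝ => (q.1 : ℂ)) = fun _ => 1 := by
  funext p; simp [dx, (hasFDerivAt_cx p).fderiv]

lemma dy_cx : dy (fun q : ℝ × ℝ => (q.1 : ℂ)) = fun _ => 0 := by
  funext p; simp [dy, (hasFDerivAt_cx p).fderiv]

lemma dx_cy : dx (fun q : ℝ × ℝ => (q.2 : ℂ)) = fun _ => 0 := by
  funext p; simp [dx, (hasFDerivAt_cy p).fderiv]

lemma dy_cy : dy (fun q : ℝ × ℝ => (q.2 : ℂ)) = fun _ => 1 := by
  funext p; simp [dy, (hasFDerivAt_cy p).fderiv]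

lemma dx_xmul (hg : Differentiable ℝ g) :
    dx (fun p => (p.1 : ℂ) * g p) = fun p => g p + (p.1 : ℂ) * dx g p := by
  rw [dx_mul diff_cx hg, dx_cx]; simp

lemma dy_xmul (hg : Differentiable ℝ g) :
    dy (fun p => (p.1 : ℂ) * g p) = fun p => (p.1 : ℂ) * dy g p := by
  rw [dy_mul diff_cx hg, dy_cx]; simp

lemma dx_ymul (hg : Differentiable ℝ g) :
    dx (fun p => (p.2 : ℂ) * g p) = fun p => (p.2 : ℂ) * dx g p := by
  rw [dx_mul diff_cy hg, dx_cy]; simp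

lemma dy_ymul (hg : Differentiable ℝ g) :
    dy (fun p => (p.2 : ℂ) * g p) = fun p => g p + (p.2 : ℂ) * dy g p := by
  rw [dy_mul diff_cy hg, dy_cy]; simp

lemma dy_dx_comm (hg : ContDiff ℝ (⊤ : ℕ∞) g) : dy (dx g) = dx (dy g) := by
  funext p
  have hdg : Differentiable ℝ (fderiv ℝ g) :=
    (hg.fderiv_right (m := (⊤ : ℕ∞)) (by simp)).differentiable (by simp)
  have key : ∀ v w : ℝ × ℝ,
      fderiv ℝ (fun q => fderiv ℝ g q v) p w = fderiv ℝ (fderiv ℝ g) p w v := by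
    intro v w
    rw [fderiv_clm_apply (hdg p) (differentiableAt_const v)]
    simp
  have sym := (hg.contDiffAt (x := p)).isSymmSndFDerivAt (by norm_num; exact WithTop.coe_le_coe.mpr le_top)
  show fderiv ℝ (fun q => fderiv ℝ g q (1, 0)) p (0, 1)
      = fderiv ℝ (fun q => fderiv ℝ g q (0, 1)) p (1, 0)
  rw [key (1, 0) (0, 1), key (0, 1) (1, 0)]
  exact sym _ _

end Toolkit

/-- E3 Casimir identity: `L₁² + L₃² − L₁H − ω²X² + ω² = 0`
as an operator identity on smooth functions. -/
theorem stmt5 (ω : ℂ) (f : ℝ × ℝ → ℂ) (hf : ContDiff ℝ (⊤ : ℕ∞) f) :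
    ∀ p, L1 ω (L1 ω f) p + L3 ω (L3 ω f) p - L1 ω (Hop ω f) p
      - ω ^ 2 * Xop (Xop f) p + ω ^ 2 * f p = 0 := by
  have hf1 : ContDiff ℝ (⊤ : ℕ∞) (dx f) := smooth_dx hf
  have hf2 : ContDiff ℝ (⊤ : ℕ∞) (dy f) := smooth_dy hf
  have hf11 := smooth_dx hf1
  have hf22 := smooth_dy hf2
  have hf111 := smooth_dx hf11
  have hf122 := smooth_dx hf22
  have df : Differentiable ℝ f := hf.differentiable (by simp)
  have df1 : Differentiable ℝ (dx f) := hf1.differentiable (by simp)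
  have df2 : Differentiable ℝ (dy f) := hf2.differentiable (by simp)
  have df11 : Differentiable ℝ (dx (dx f)) := hf11.differentiable (by simp)
  have df12 : Differentiable ℝ (dx (dy f)) := (smooth_dx hf2).differentiable (by simp)
  have df22 : Differentiable ℝ (dy (dy f)) := hf22.differentiable (by simp)
  have df111 : Differentiable ℝ (dx (dx (dx f))) := hf111.differentiable (by simp)
  have df122 : Differentiable ℝ (dx (dy (dy f))) := hf122.differentiable (by simp)
  have db1 : Differentiable ℝ (fun p : ℝ × ℝ => (p.1 : ℂ) * f p) := diff_cx.mul df
  have db2 : Differentiable ℝ (fun p : ℝ × ℝ => (p.1 : ℂ) * ((p.1 : ℂ) * f p)) :=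
    diff_cx.mul db1
  have db3 : Differentiable ℝ (fun p : ℝ × ℝ => ω ^ 2 * ((p.1 : ℂ) * ((p.1 : ℂ) * f p))) :=
    (differentiable_const _).mul db2
  have db4 : Differentiable ℝ (fun p : ℝ × ℝ => (p.1 : ℂ) * dx f p) := diff_cx.mul df1
  have db5 : Differentiable ℝ (fun p : ℝ × ℝ => (p.1 : ℂ) * ((p.1 : ℂ) * dx f p)) :=
    diff_cx.mul db4
  have db6 : Differentiable ℝ (fun p : ℝ × ℝ => (2 * ω ^ 2) * ((p.1 : ℂ) * f p)) :=
    (differentiable_const _).mul db1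
  have db7 : Differentiable ℝ
      (fun p : ℝ × ℝ => ω ^ 2 * ((p.1 : ℂ) * ((p.1 : ℂ) * dx f p))) :=
    (differentiable_const _).mul db5
  have db8 : Differentiable ℝ (fun p : ℝ × ℝ =>
      (2 * ω ^ 2) * ((p.1 : ℂ) * f p) + ω ^ 2 * ((p.1 : ℂ) * ((p.1 : ℂ) * dx f p))) :=
    db6.add db7
  have dc1 : Differentiable ℝ (fun p : ℝ × ℝ => (p.2 : ℂ) * f p) := diff_cy.mul df
  have dc2 : Differentiable ℝ (fun p : ℝ × ℝ => (p.1 : ℂ) * ((p.2 : ℂ) * f p)) :=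
    diff_cx.mul dc1
  have dc3 : Differentiable ℝ (fun p : ℝ × ℝ => ω ^ 2 * ((p.1 : ℂ) * ((p.2 : ℂ) * f p))) :=
    (differentiable_const _).mul dc2
  have dc4 : Differentiable ℝ (fun p : ℝ × ℝ => (p.2 : ℂ) * dy f p) := diff_cy.mul df2
  have dc5 : Differentiable ℝ (fun p : ℝ × ℝ => (p.1 : ℂ) * ((p.2 : ℂ) * dy f p)) :=
    diff_cx.mul dc4
  have dc6 : Differentiable ℝ (fun p : ℝ × ℝ => ω ^ 2 * ((p.1 : ℂ) * f p)) :=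
    (differentiable_const _).mul db1
  have dc7 : Differentiable ℝ
      (fun p : ℝ × ℝ => ω ^ 2 * ((p.1 : ℂ) * ((p.2 : ℂ) * dy f p))) :=
    (differentiable_const _).mul dc5
  have dc8 : Differentiable ℝ (fun p : ℝ × ℝ =>
      ω ^ 2 * ((p.1 : ℂ) * f p) + ω ^ 2 * ((p.1 : ℂ) * ((p.2 : ℂ) * dy f p))) :=
    dc6.add dc7
  have dh1 : Differentiable ℝ (fun p : ℝ × ℝ => dx (dx f) p + dy (dy f) p) := df11.add df22
  have dh2 : Differentiable ℝ (fun p : ℝ × ℝ => (p.2 : ℂ) * ((p.2 : ℂ) * f p)) :=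
    diff_cy.mul dc1
  have dh2c : Differentiable ℝ (fun p : ℝ × ℝ => ω ^ 2 * ((p.2 : ℂ) * ((p.2 : ℂ) * f p))) :=
    (differentiable_const _).mul dh2
  have dh3 : Differentiable ℝ (fun p : ℝ × ℝ =>
      ω ^ 2 * ((p.1 : ℂ) * ((p.1 : ℂ) * f p)) + ω ^ 2 * ((p.2 : ℂ) * ((p.2 : ℂ) * f p))) :=
    db3.add dh2c
  have dh4 : Differentiable ℝ (fun p : ℝ × ℝ => (p.2 : ℂ) * dx f p) := diff_cy.mul df1
  have dh5 : Differentiable ℝ (fun p : ℝ × ℝ => (p.2 : ℂ) * ((p.2 : ℂ) * dx f p)) :=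
    diff_cy.mul dh4
  have dh5c : Differentiable ℝ
      (fun p : ℝ × ℝ => ω ^ 2 * ((p.2 : ℂ) * ((p.2 : ℂ) * dx f p))) :=
    (differentiable_const _).mul dh5
  have dh6 : Differentiable ℝ (fun p : ℝ × ℝ =>
      ω ^ 2 * ((p.1 : ℂ) * ((p.1 : ℂ) * dx f p))
        + ω ^ 2 * ((p.2 : ℂ) * ((p.2 : ℂ) * dx f p))) := db7.add dh5c
  have dh7 : Differentiable ℝ (fun p : ℝ × ℝ =>
      (2 * ω ^ 2) * ((p.1 : ℂ) * f p)
        + (ω ^ 2 * ((p.1 : ℂ) * ((p.1 : ℂ) * dx f p))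
            + ω ^ 2 * ((p.2 : ℂ) * ((p.2 : ℂ) * dx f p)))) := db6.add dh6
  have dh8 : Differentiable ℝ (fun p : ℝ × ℝ => dx (dx (dx f)) p + dx (dy (dy f)) p) :=
    df111.add df122
  have dxo1 : Differentiable ℝ (fun p : ℝ × ℝ => (p.1 : ℂ) * dy f p) := diff_cx.mul df2
  -- L1 chain
  have E1 : L1 ω f = fun p => dx (dx f) p - ω ^ 2 * ((p.1 : ℂ) * ((p.1 : ℂ) * f p)) := by
    funext p; simp only [L1]; ring
  have D1 : dx (L1 ω f) = fun p => dx (dx (dx f)) p -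
      ((2 * ω ^ 2) * ((p.1 : ℂ) * f p) + ω ^ 2 * ((p.1 : ℂ) * ((p.1 : ℂ) * dx f p))) := by
    rw [E1, dx_sub df11 db3, dx_const_mul (ω ^ 2) db2, dx_xmul db1, dx_xmul df]
    funext p; simp only []; ring
  have D11 : dx (dx (L1 ω f)) = fun p => dx (dx (dx (dx f))) p - 2 * ω ^ 2 * f p
      - 4 * ω ^ 2 * (p.1 : ℂ) * dx f p - ω ^ 2 * (p.1 : ℂ) ^ 2 * dx (dx f) p := by
    rw [D1, dx_sub df111 db8, dx_add db6 db7, dx_const_mul (2 * ω ^ 2) db1, dx_xmul df,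
      dx_const_mul (ω ^ 2) db5, dx_xmul db4, dx_xmul df1]
    funext p; simp only []; ring
  -- L3 chain
  have E3 : L3 ω f = fun p => dx (dy f) p - ω ^ 2 * ((p.1 : ℂ) * ((p.2 : ℂ) * f p)) := by
    funext p; simp only [L3]; ring
  have Dy3 : dy (L3 ω f) = fun p => dx (dy (dy f)) p -
      (ω ^ 2 * ((p.1 : ℂ) * f p) + ω ^ 2 * ((p.1 : ℂ) * ((p.2 : ℂ) * dy f p))) := by
    rw [E3, dy_sub df12 dc3, dy_dx_comm hf2, dy_const_mul (ω ^ 2) dc2, dy_xmul dc1,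
      dy_ymul df]
    funext p; simp only []; ring
  have Dxy3 : dx (dy (L3 ω f)) = fun p => dx (dx (dy (dy f))) p - ω ^ 2 * f p
      - ω ^ 2 * (p.1 : ℂ) * dx f p - ω ^ 2 * (p.2 : ℂ) * dy f p
      - ω ^ 2 * (p.1 : ℂ) * (p.2 : ℂ) * dx (dy f) p := by
    rw [Dy3, dx_sub df122 dc8, dx_add dc6 dc7, dx_const_mul (ω ^ 2) db1, dx_xmul df,
      dx_const_mul (ω ^ 2) dc5, dx_xmul dc4, dx_ymul df2]
    funext p; simp only []; ring
  -- H chain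
  have EH : Hop ω f = fun p => (dx (dx f) p + dy (dy f) p) -
      (ω ^ 2 * ((p.1 : ℂ) * ((p.1 : ℂ) * f p))
        + ω ^ 2 * ((p.2 : ℂ) * ((p.2 : ℂ) * f p))) := by
    funext p; simp only [Hop]; ring
  have DH : dx (Hop ω f) = fun p => (dx (dx (dx f)) p + dx (dy (dy f)) p) -
      ((2 * ω ^ 2) * ((p.1 : ℂ) * f p)
        + (ω ^ 2 * ((p.1 : ℂ) * ((p.1 : ℂ) * dx f p))
            + ω ^ 2 * ((p.2 : ℂ) * ((p.2 : ℂ) * dx f p)))) := by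
    rw [EH, dx_sub dh1 dh3, dx_add df11 df22, dx_add db3 dh2c, dx_const_mul (ω ^ 2) db2,
      dx_xmul db1, dx_xmul df, dx_const_mul (ω ^ 2) dh2, dx_ymul dc1, dx_ymul df]
    funext p; simp only []; ring
  have DHH : dx (dx (Hop ω f)) = fun p => dx (dx (dx (dx f))) p + dx (dx (dy (dy f))) p
      - 2 * ω ^ 2 * f p - 4 * ω ^ 2 * (p.1 : ℂ) * dx f p
      - ω ^ 2 * (p.1 : ℂ) ^ 2 * dx (dx f) p - ω ^ 2 * (p.2 : ℂ) ^ 2 * dx (dx f) p := by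
    rw [DH, dx_sub dh8 dh7, dx_add df111 df122, dx_add db6 dh6,
      dx_const_mul (2 * ω ^ 2) db1, dx_xmul df, dx_add db7 dh5c, dx_const_mul (ω ^ 2) db5,
      dx_xmul db4, dx_xmul df1, dx_const_mul (ω ^ 2) dh5, dx_ymul dh4, dx_ymul df1]
    funext p; simp only []; ring
  -- X chain
  have DyX : dy (Xop f) = fun p => (p.1 : ℂ) * dy (dy f) p -
      (dx f p + (p.2 : ℂ) * dx (dy f) p) := by
    rw [show Xop f = fun p => (p.1 : ℂ) * dy f p - (p.2 : ℂ) * dx f p from rfl,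
      dy_sub dxo1 dh4, dy_xmul df2, dy_ymul df1, dy_dx_comm hf]
  have DxX : dx (Xop f) = fun p => (dy f p + (p.1 : ℂ) * dx (dy f) p) -
      (p.2 : ℂ) * dx (dx f) p := by
    rw [show Xop f = fun p => (p.1 : ℂ) * dy f p - (p.2 : ℂ) * dx f p from rfl,
      dx_sub dxo1 dh4, dx_xmul df2, dx_ymul df1]
  -- assemble
  intro p
  have a1 : L1 ω (L1 ω f) p
      = dx (dx (L1 ω f)) p - ω ^ 2 * (p.1 : ℂ) ^ 2 * L1 ω f p := rfl
  have a2 : L3 ω (L3 ω f) p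
      = dx (dy (L3 ω f)) p - ω ^ 2 * (p.1 : ℂ) * (p.2 : ℂ) * L3 ω f p := rfl
  have a3 : L1 ω (Hop ω f) p
      = dx (dx (Hop ω f)) p - ω ^ 2 * (p.1 : ℂ) ^ 2 * Hop ω f p := rfl
  have a4 : Xop (Xop f) p = (p.1 : ℂ) * dy (Xop f) p - (p.2 : ℂ) * dx (Xop f) p := rfl
  rw [a1, a2, a3, a4, congrFun D11 p, congrFun Dxy3 p, congrFun DHH p, congrFun DyX p,
    congrFun DxX p]
  simp only [L1, L3, Hop]
  ring
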